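/- Let G be a temporal directed graph, let x, v be vertices and [tα,tω] a time interval such that at least one temporal (x,v)-path within [tα,tω] exists. Then there exists an earliest-arrival (x,v)-path π = ⟨(x=v_0,v_1,t_1),…,(v_{k−1},v_k=v,t_k)⟩ within [tα,tω] such that for every 0 < i < k the prefix-subpath ⟨(v_0,v_1,t_1),…,(v_{i−1},v_i,t_i)⟩ is an earliest-arrival (x,v_i)-path within [tα,tω]. (Note: the existential quantifier is necessary; an arbitrary earliest-arrival path need not have earliest-arrival prefixes.) -/
import Mathlib


/-- A temporal `(s,d)`-path within the time interval `[tα, tω]` in a temporal directed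
graph on vertex type `V` with time-indexed edge relation `E`: a sequence of pairwise
distinct vertices `v 0 = s, …, v k = d` together with strictly increasing departure
times `t 1 < ⋯ < t k` (here `t i` is the time of the edge from `v i` to `v (i+1)`),
each edge present at its departure time, all departure times `≥ tα`, and arrival
`t k + 1 ≤ tω`.  The empty path (`k = 0`) requires `s = d`. -/
structure TPath (V : Type*) (E : ℕ → V → V → Prop) (s d : V) (tα tω : ℕ) where
  k : ℕ
  v : Fin (k + 1) → V
  t : Fin k → ℕ
  hv0 : v 0 = s
  hvk : v (Fin.last k) = d
  inj : Function.Injective v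
  mono : StrictMono t
  hedge : ∀ i : Fin k, E (t i) (v i.castSucc) (v i.succ)
  hstart : ∀ i : Fin k, tα ≤ t i
  hend : ∀ i : Fin k, t i + 1 ≤ tω

namespace TPath

variable {V : Type*} {E : ℕ → V → V → Prop} {s d : V} {tα tω : ℕ}

/-- Ending (arrival) time of a temporal path: `t k + 1`; the empty path arrives at `tα`. -/
def endTime (π : TPath V E s d tα tω) : ℕ :=
  if h : 0 < π.k then π.t ⟨π.k - 1, by omega⟩ + 1 else tα

/-- `x` is the index of the first point of contact of the path `π` with the decoy set `C`:
`π.v x ∈ C`, and `x` is the least such index. -/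
def hitsAt (π : TPath V E s d tα tω) (C : Set V) (x : Fin (π.k + 1)) : Prop :=
  π.v x ∈ C ∧ ∀ j : Fin (π.k + 1), π.v j ∈ C → x ≤ j

/-- Index of the first vertex of `π` lying in `C` (`sInf ∅ = 0` if there is none). -/
noncomputable def firstContact (π : TPath V E s d tα tω) (C : Set V) : ℕ :=
  sInf {i : ℕ | ∃ h : i < π.k + 1, π.v ⟨i, h⟩ ∈ C}

/-- Response time `RT(π, C) = t k − t x` where `v x` is the first point of contact of `π`
with `C` (entered via the edge with time `t x`); junk value `0` if `π` does not meet `C`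
properly. -/
noncomputable def RT (π : TPath V E s d tα tω) (C : Set V) : ℕ :=
  if h : 0 < π.firstContact C ∧ π.firstContact C ≤ π.k ∧ 0 < π.k then
    π.t ⟨π.k - 1, by omega⟩ - π.t ⟨π.firstContact C - 1, by omega⟩
  else 0

end TPath

/-- Earliest arrival time from the source set `S` to `x` within `[tα, tω]`
(`⊤ = ∞` if unreachable; it is `tα` for `x ∈ S`, realized by the empty path). -/
noncomputable def ea {V : Type*} (E : ℕ → V → V → Prop) (S : Set V) (tα tω : ℕ)
    (x : V) : ℕ∞ :=
  sInf {n : ℕ∞ | ∃ s ∈ S, ∃ π : TPath V E s x tα tω, n = (π.endTime : ℕ∞)}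

/-- `C` is a temporal `(S,d)`-cut within `[tα, tω]`: every temporal `(s,d)`-path within
`[tα, tω]` with `s ∈ S` contains a vertex of `C`. -/
def IsTemporalCut {V : Type*} (E : ℕ → V → V → Prop) (S : Set V) (d : V) (tα tω : ℕ)
    (C : Set V) : Prop :=
  ∀ s ∈ S, ∀ π : TPath V E s d tα tω, ∃ i, π.v i ∈ C

/-- The prefix-subpath `⟨(v 0, v 1, t 1), …, (v (i-1), v i, t i)⟩` of a temporal path,
ending at the vertex `π.v i`. -/
def TPath.take {V : Type*} {E : ℕ → V → V → Prop} {s d : V} {tα tω : ℕ}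
    (π : TPath V E s d tα tω) (i : ℕ) (hi : i ≤ π.k) :
    TPath V E s (π.v ⟨i, Nat.lt_succ_of_le hi⟩) tα tω where
  k := i
  v := fun j => π.v ⟨j.val, by have := j.isLt; omega⟩
  t := fun j => π.t ⟨j.val, by have := j.isLt; omega⟩
  hv0 := by
    refine Eq.trans (congrArg π.v ?_) π.hv0
    ext
    simp
  hvk := congrArg π.v (by ext; simp)
  inj := fun a b hab => Fin.ext (by simpa using π.inj hab)
  mono := fun a b hab => π.mono hab
  hedge := fun j => π.hedge ⟨j.val, by have := j.isLt; omega⟩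
  hstart := fun j => π.hstart ⟨j.val, by have := j.isLt; omega⟩
  hend := fun j => π.hend ⟨j.val, by have := j.isLt; omega⟩

/-- `π` is an earliest-arrival path: its ending time is minimal among all temporal
`(s,d)`-paths within `[tα, tω]`. -/
def IsEarliestArrival {V : Type*} {E : ℕ → V → V → Prop} {s d : V} {tα tω : ℕ}
    (π : TPath V E s d tα tω) : Prop :=
  ∀ π' : TPath V E s d tα tω, π.endTime ≤ π'.endTime

section Auxiliary

variable {V : Type*} {E : ℕ → V → V → Prop} {s d : V} {tα tω : ℕ}

lemma TPath.tα_le_endTime (π : TPath V E s d tα tω) : tα ≤ π.endTime := by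
  unfold TPath.endTime
  split
  · exact Nat.le_succ_of_le (π.hstart _)
  · exact le_rfl

lemma TPath.t_add_one_le_endTime (π : TPath V E s d tα tω) (j : Fin π.k) :
    π.t j + 1 ≤ π.endTime := by
  have hk : 0 < π.k := j.pos
  unfold TPath.endTime
  rw [dif_pos hk]
  have : π.t j ≤ π.t ⟨π.k - 1, by omega⟩ := π.mono.monotone (by
    rw [Fin.le_def]; exact Nat.le_sub_one_of_lt j.isLt)
  omega

lemma TPath.endTime_take (π : TPath V E s d tα tω) (i : ℕ) (hi : i ≤ π.k) (h0 : 0 < i) :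
    (π.take i hi).endTime = π.t ⟨i - 1, by omega⟩ + 1 :=
  dif_pos h0

lemma TPath.endTime_take_zero (π : TPath V E s d tα tω) (i : ℕ) (hi : i ≤ π.k)
    (h0 : i = 0) : (π.take i hi).endTime = tα :=
  dif_neg (show ¬ 0 < i by omega)

lemma TPath.endTime_take_le (π : TPath V E s d tα tω) (i : ℕ) (hi : i ≤ π.k) :
    (π.take i hi).endTime ≤ π.endTime := by
  rcases Nat.eq_zero_or_pos i with h0 | h0
  · rw [π.endTime_take_zero i hi h0]
    exact π.tα_le_endTime
  · rw [π.endTime_take i hi h0]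
    exact π.t_add_one_le_endTime ⟨i - 1, by omega⟩

/-- Transport a path along an equality of endpoints. -/
def TPath.castEnd {d' : V} (h : d = d') (π : TPath V E s d tα tω) :
    TPath V E s d' tα tω := h ▸ π

lemma TPath.endTime_castEnd {d' : V} (h : d = d') (π : TPath V E s d tα tω) :
    (π.castEnd h).endTime = π.endTime := by subst h; rfl

lemma isEA_congr {d' : V} (h : d = d') {π : TPath V E s d tα tω}
    {π' : TPath V E s d' tα tω} (he : π.endTime = π'.endTime)
    (hp : IsEarliestArrival π) : IsEarliestArrival π' := by
  subst h
  intro ρ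
  rw [← he]
  exact hp ρ

/-- Append an edge `(d, w)` departing at time `T` to a temporal path. -/
def TPath.snoc (π : TPath V E s d tα tω) (w : V) (T : ℕ)
    (hT : ∀ j : Fin π.k, π.t j < T) (hα : tα ≤ T) (hω : T + 1 ≤ tω)
    (he : E T d w) (hw : w ∉ Set.range π.v) : TPath V E s w tα tω where
  k := π.k + 1
  v := fun j => if h : j.val < π.k + 1 then π.v ⟨j, h⟩ else w
  t := fun j => if h : j.val < π.k then π.t ⟨j, h⟩ else T
  hv0 := by
    rw [dif_pos (show ((0 : Fin (π.k + 1 + 1)) : ℕ) < π.k + 1 by simp)]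
    exact π.hv0
  hvk := by
    rw [dif_neg (show ¬ ((Fin.last (π.k + 1)) : ℕ) < π.k + 1 by simp)]
  inj := by
    intro a b hab
    dsimp only at hab
    split_ifs at hab with h1 h2 h2
    · have h := π.inj hab
      have hv : (⟨a.val, h1⟩ : Fin (π.k + 1)).val = (⟨b.val, h2⟩ : Fin (π.k + 1)).val :=
        congrArg Fin.val h
      exact Fin.ext hv
    · exact absurd ⟨_, hab⟩ hw
    · exact absurd ⟨_, hab.symm⟩ hw
    · exact Fin.ext (by have := a.isLt; have := b.isLt; omega)
  mono := by
    intro a b hab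
    dsimp only
    split_ifs with h1 h2 h2
    · exact π.mono (Fin.mk_lt_mk.mpr (Fin.lt_def.mp hab))
    · exact hT _
    · exact absurd (Fin.lt_def.mp hab) (by have := b.isLt; omega)
    · exact absurd (Fin.lt_def.mp hab) (by have := a.isLt; have := b.isLt; omega)
  hedge := by
    intro i
    rcases Nat.lt_or_ge i.val π.k with h | h
    · rw [dif_pos h, dif_pos (show i.castSucc.val < π.k + 1 by
          simp only [Fin.coe_castSucc]; omega),
        dif_pos (show i.succ.val < π.k + 1 by simp only [Fin.val_succ]; omega)]
      exact π.hedge ⟨i.val, h⟩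
    · have hik : i.val = π.k := by have := i.isLt; omega
      rw [dif_neg (by omega), dif_pos (show i.castSucc.val < π.k + 1 by
          simp only [Fin.coe_castSucc]; omega),
        dif_neg (show ¬ i.succ.val < π.k + 1 by simp only [Fin.val_succ]; omega)]
      have : (⟨i.castSucc.val, by simp only [Fin.coe_castSucc]; omega⟩ : Fin (π.k + 1)) = Fin.last π.k :=
        Fin.ext (by simp only [Fin.coe_castSucc, Fin.val_last]; omega)
      rw [this, π.hvk]
      exact he
  hstart := by
    intro i
    split_ifs with h
    · exact π.hstart _
    · exact hα
  hend := by
    intro i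
    split_ifs with h
    · exact π.hend _
    · exact hω

lemma TPath.endTime_snoc (π : TPath V E s d tα tω) (w : V) (T : ℕ)
    (hT : ∀ j : Fin π.k, π.t j < T) (hα : tα ≤ T) (hω : T + 1 ≤ tω)
    (he : E T d w) (hw : w ∉ Set.range π.v) :
    (π.snoc w T hT hα hω he hw).endTime = T + 1 := by
  have hk : 0 < (π.snoc w T hT hα hω he hw).k := Nat.succ_pos _
  unfold TPath.endTime
  rw [dif_pos hk]
  show (if h : π.k + 1 - 1 < π.k then π.t ⟨π.k + 1 - 1, h⟩ else T) + 1 = T + 1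
  rw [dif_neg (by omega)]

set_option maxHeartbeats 1000000 in
lemma key_induction {V : Type*} (E : ℕ → V → V → Prop) (x : V) (tα tω : ℕ) :
    ∀ n : ℕ, ∀ v : V, (∀ π' : TPath V E x v tα tω, n ≤ π'.endTime) →
      ∀ π0 : TPath V E x v tα tω, π0.endTime = n →
      ∃ π : TPath V E x v tα tω, π.endTime = n ∧
        ∀ (i : ℕ) (h1 : 0 < i) (h2 : i < π.k),
          IsEarliestArrival (π.take i (Nat.le_of_lt h2)) := by
  intro n
  induction n using Nat.strong_induction_on with
  | _ n ih =>
  intro v hlb π0 h0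
  by_cases hk : 0 < π0.k
  case neg =>
    exact ⟨π0, h0, fun i h1 h2 => absurd h2 (by omega)⟩
  case pos =>
  set K := π0.k with hK
  have hK1 : K - 1 ≤ K := Nat.sub_le _ _
  set u : V := π0.v ⟨K - 1, Nat.lt_succ_of_le hK1⟩ with hu
  set T : ℕ := π0.t ⟨K - 1, by omega⟩ with hTdef
  have hn : n = T + 1 := by
    rw [← h0]
    unfold TPath.endTime
    rw [dif_pos hk]
  set ρ : TPath V E x u tα tω := π0.take (K - 1) hK1 with hρ
  have hρT : ρ.endTime ≤ T := by
    rcases Nat.eq_zero_or_pos (K - 1) with h0' | h0'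
    · rw [hρ]
      rw [π0.endTime_take_zero (K-1) hK1 h0']
      exact π0.hstart _
    · rw [hρ, π0.endTime_take (K-1) hK1 h0']
      have := π0.mono (show (⟨K-1-1, by omega⟩ : Fin K) < ⟨K-1, by omega⟩ from by
        simp only [Fin.mk_lt_mk]; omega)
      omega
  set Su : Set ℕ := {m : ℕ | ∃ π' : TPath V E x u tα tω, π'.endTime = m} with hSu
  have hSune : Su.Nonempty := ⟨ρ.endTime, ρ, rfl⟩
  set m : ℕ := sInf Su with hm
  obtain ⟨πm, hπm⟩ : m ∈ Su := Nat.sInf_mem hSune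
  have hlbu : ∀ π' : TPath V E x u tα tω, m ≤ π'.endTime :=
    fun π' => Nat.sInf_le ⟨π', rfl⟩
  have hmT : m ≤ T := le_trans (hlbu ρ) hρT
  obtain ⟨πu, hπu, hpre⟩ := ih m (by omega) u hlbu πm hπm
  have hvnot : v ∉ Set.range πu.v := by
    rintro ⟨j, hj⟩
    have hjk : j.val ≤ πu.k := by have := j.isLt; omega
    have hj' : πu.v ⟨j.val, Nat.lt_succ_of_le hjk⟩ = v := by
      exact hj
    set ρ' := (πu.take j.val hjk).castEnd hj' with hρ'
    have h1 : n ≤ ρ'.endTime := hlb ρ'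
    have h2 : ρ'.endTime ≤ πu.endTime := by
      rw [hρ', TPath.endTime_castEnd]
      exact πu.endTime_take_le j.val hjk
    omega
  have hT' : ∀ j : Fin πu.k, πu.t j < T := by
    intro j
    have := πu.t_add_one_le_endTime j
    omega
  have hα : tα ≤ T := π0.hstart _
  have hω : T + 1 ≤ tω := π0.hend _
  have hedge : E T u v := by
    have h := π0.hedge ⟨K - 1, by omega⟩
    have hc : (⟨K-1, by omega⟩ : Fin K).castSucc = ⟨K-1, Nat.lt_succ_of_le hK1⟩ :=
      Fin.ext rfl
    have hs : (⟨K-1, by omega⟩ : Fin K).succ = Fin.last K :=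
      Fin.ext (by simp [Fin.val_succ, Fin.last]; omega)
    rw [hc, hs, π0.hvk] at h
    exact h
  set σ : TPath V E x v tα tω := πu.snoc v T hT' hα hω hedge hvnot with hσ
  have hσend : σ.endTime = n := by
    rw [hσ, πu.endTime_snoc, hn]
  have hσk : σ.k = πu.k + 1 := rfl
  refine ⟨σ, hσend, ?_⟩
  intro i h1 h2
  have hik : i ≤ πu.k := by omega
  -- endpoint of σ.take i equals endpoint of πu.take i
  have hvi : σ.v ⟨i, Nat.lt_succ_of_le (Nat.le_of_lt h2)⟩
      = πu.v ⟨i, Nat.lt_succ_of_le hik⟩ := by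
    show (if h : i < πu.k + 1 then πu.v ⟨i, h⟩ else v) = _
    rw [dif_pos (by omega)]
  have hti : ∀ (hi : i - 1 < πu.k + 1), σ.t ⟨i - 1, hi⟩ = πu.t ⟨i - 1, by omega⟩ := by
    intro hi
    show (if h : i - 1 < πu.k then πu.t ⟨i - 1, h⟩ else T) = _
    rw [dif_pos (by omega)]
  have hσtake : (σ.take i (Nat.le_of_lt h2)).endTime
      = πu.t ⟨i - 1, by omega⟩ + 1 := by
    rw [σ.endTime_take i (Nat.le_of_lt h2) h1]
    rw [hti (by omega)]
  rcases lt_or_eq_of_le hik with hlt | heq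
  · -- prefix of πu
    have hEA : IsEarliestArrival (πu.take i (Nat.le_of_lt hlt)) := hpre i h1 hlt
    refine isEA_congr hvi.symm ?_ hEA
    rw [hσtake, πu.endTime_take i (Nat.le_of_lt hlt) h1]
  · -- i = πu.k : the prefix is πu itself (up to endpoint cast)
    have huend : πu.v ⟨i, Nat.lt_succ_of_le hik⟩ = u := by
      exact (congrArg πu.v (Fin.ext (show i = πu.k from heq))).trans πu.hvk
    have hEA : IsEarliestArrival πu := fun ρ'' => by rw [hπu]; exact hlbu ρ''
    have hEA' : IsEarliestArrival (TPath.castEnd huend.symm πu) := by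
      refine isEA_congr huend.symm ?_ hEA
      rw [TPath.endTime_castEnd]
    refine isEA_congr hvi.symm ?_ hEA'
    rw [hσtake, TPath.endTime_castEnd]
    unfold TPath.endTime
    rw [dif_pos (show 0 < πu.k by omega)]
    have hfin : (⟨πu.k - 1, by omega⟩ : Fin πu.k) = ⟨i - 1, by omega⟩ :=
      Fin.ext (show πu.k - 1 = i - 1 by omega)
    rw [hfin]

end Auxiliary
/-- if some temporal `(x,v)`-path within `[tα, tω]` exists, then there is an
earliest-arrival `(x,v)`-path all of whose proper prefix-subpaths are earliest-arrival
paths to their respective endpoints. -/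
theorem exists_earliestArrival_with_earliestArrival_prefixes
    {V : Type*} [Fintype V] (E : ℕ → V → V → Prop) (x v : V) (tα tω : ℕ)
    (hne : Nonempty (TPath V E x v tα tω)) :
    ∃ π : TPath V E x v tα tω, IsEarliestArrival π ∧
      ∀ (i : ℕ) (h1 : 0 < i) (h2 : i < π.k),
        IsEarliestArrival (π.take i (Nat.le_of_lt h2)) := by
  obtain ⟨π0⟩ := hne
  set S : Set ℕ := {n : ℕ | ∃ π' : TPath V E x v tα tω, π'.endTime = n} with hS
  have hSne : S.Nonempty := ⟨π0.endTime, π0, rfl⟩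
  set n : ℕ := sInf S with hn
  obtain ⟨πm, hπm⟩ : n ∈ S := Nat.sInf_mem hSne
  have hlb : ∀ π' : TPath V E x v tα tω, n ≤ π'.endTime :=
    fun π' => Nat.sInf_le ⟨π', rfl⟩
  obtain ⟨π, hπ, hpre⟩ := key_induction E x tα tω n v hlb πm hπm
  exact ⟨π, fun ρ => hπ ▸ hlb ρ, hpre⟩
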